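/- Suppose C ⊆ {0,1}^n has VC dimension d and there exists a coordinate projection p: {0,1}^n → {0,1}^{n−k} (deleting k coordinates) such that p(C) is a maximum class of VC dimension d. Then there exists a maximum class C* ⊆ {0,1}^n of VC dimension d + k with C ⊆ C*. -/
import Mathlib


open Finset

/-- A concept class `C` shatters a coordinate set `I` if every assignment of
values to the coordinates in `I` is realized by some concept in `C`. -/
def Shatters {α : Type*} (C : Finset (α → Bool)) (I : Finset α) : Prop :=
  ∀ f : α → Bool, ∃ c ∈ C, ∀ i ∈ I, c i = f i

/-- The VC dimension of a concept class: the largest cardinality of a shattered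
coordinate set. -/
noncomputable def vcDim {α : Type*} [Fintype α] [DecidableEq α]
    (C : Finset (α → Bool)) : ℕ :=
  letI := Classical.decPred (Shatters C)
  (Finset.univ.filter (Shatters C)).sup Finset.card

/-- The subcube with free coordinate set `S` and anchor `a`: all vectors that
agree with `a` outside `S`.  Its dimension is `S.card`. -/
def subcube {α : Type*} [Fintype α] [DecidableEq α] (S : Finset α) (a : α → Bool) :
    Finset (α → Bool) :=
  Finset.univ.filter fun c => ∀ i ∉ S, c i = a i

/-- Projection of the `n`-cube deleting the coordinates in `K`. -/
def projAwaySet {n : ℕ} (K : Finset (Fin n)) (c : Fin n → Bool) :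
    {i : Fin n // i ∉ K} → Bool :=
  fun i => c i.1

namespace VCWork

variable {α : Type*} [Fintype α] [DecidableEq α]

/-- Sauer bound function. -/
def Phi (D m : ℕ) : ℕ := ∑ i ∈ Finset.range (D + 1), m.choose i

lemma Phi_pascal (D m : ℕ) : Phi (D+1) (m+1) = Phi (D+1) m + Phi D m := by
  unfold Phi
  rw [Finset.sum_range_succ' (fun i => (m+1).choose i) (D+1)]
  rw [Finset.sum_range_succ' (fun i => m.choose i) (D+1)]
  simp only [Nat.choose_succ_succ, Nat.choose_zero_right, Finset.sum_add_distrib,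
    Nat.succ_eq_add_one]
  omega

lemma Phi_eq_pow (D m : ℕ) (h : m ≤ D) : Phi D m = 2 ^ m := by
  unfold Phi
  rw [← Nat.sum_range_choose m]
  exact (Finset.sum_subset (Finset.range_subset_range.2 (by omega))
    (fun i _ hi => Nat.choose_eq_zero_of_lt (by simp only [Finset.mem_range, not_lt] at hi; omega))).symm

lemma le_vcDim_of_shatters {C : Finset (α → Bool)} {S : Finset α}
    (h : Shatters C S) : S.card ≤ _root_.vcDim C := by
  unfold _root_.vcDim
  letI := Classical.decPred (Shatters C)
  exact Finset.le_sup (Finset.mem_filter.2 ⟨Finset.mem_univ _, h⟩)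

lemma vcDim_le_of {C : Finset (α → Bool)} {D : ℕ}
    (h : ∀ S : Finset α, Shatters C S → S.card ≤ D) : _root_.vcDim C ≤ D := by
  unfold _root_.vcDim
  letI := Classical.decPred (Shatters C)
  exact Finset.sup_le (fun S hS => h S (Finset.mem_filter.1 hS).2)

lemma vcDim_le_card (C : Finset (α → Bool)) : _root_.vcDim C ≤ Fintype.card α :=
  vcDim_le_of (fun S _ => by simpa using Finset.card_le_card (Finset.subset_univ S))

omit [Fintype α] [DecidableEq α] in
lemma shatters_mono {C C' : Finset (α → Bool)} {S : Finset α}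
    (hCC : C ⊆ C') (h : Shatters C S) : Shatters C' S := by
  intro f
  obtain ⟨c, hc, hagree⟩ := h f
  exact ⟨c, hCC hc, hagree⟩

end VCWork

section Proj

variable {α : Type*} [Fintype α] [DecidableEq α] (x : α)

def proj (c : α → Bool) : {i : α // i ≠ x} → Bool := fun i => c i.1

def bext (b : Bool) (u : {i : α // i ≠ x} → Bool) : α → Bool :=
  fun i => if h : i = x then b else u ⟨i, h⟩

variable {x}

lemma proj_bext (b : Bool) (u : {i : α // i ≠ x} → Bool) : proj x (bext x b u) = u := by
  funext i
  exact dif_neg i.2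

lemma bext_apply_self (b : Bool) (u : {i : α // i ≠ x} → Bool) : bext x b u x = b :=
  dif_pos rfl

lemma bext_apply_ne (b : Bool) (u : {i : α // i ≠ x} → Bool) {i : α} (h : i ≠ x) :
    bext x b u i = u ⟨i, h⟩ :=
  dif_neg h

lemma bext_proj {c : α → Bool} : bext x (c x) (proj x c) = c := by
  funext i
  by_cases h : i = x
  · subst h; exact dif_pos rfl
  · exact dif_neg h

lemma bext_injective (b : Bool) : Function.Injective (bext x b) :=
  Function.LeftInverse.injective (g := proj x) (fun u => proj_bext b u)

lemma card_compl_ne : Fintype.card {i : α // i ≠ x} = Fintype.card α - 1 := by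
  have : Fintype.card {i : α // i = x} = 1 := Fintype.card_subtype_eq x
  have h2 := Fintype.card_subtype_compl (fun i : α => i = x)
  simpa [this] using h2

variable (x)

/-- The "tail": projections having both extensions in `M`. -/
def tail (M : Finset (α → Bool)) : Finset (({i : α // i ≠ x}) → Bool) :=
  Finset.univ.filter (fun u => bext x true u ∈ M ∧ bext x false u ∈ M)

variable {x}

lemma mem_image_proj_filter {M : Finset (α → Bool)} {b : Bool}
    {u : {i : α // i ≠ x} → Bool} :
    u ∈ (M.filter (fun c => c x = b)).image (proj x) ↔ bext x b u ∈ M := by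
  constructor
  · rintro hu
    obtain ⟨c, hc, rfl⟩ := Finset.mem_image.1 hu
    obtain ⟨hcM, hcb⟩ := Finset.mem_filter.1 hc
    rw [← hcb, bext_proj]
    exact hcM
  · intro h
    exact Finset.mem_image.2 ⟨bext x b u, Finset.mem_filter.2 ⟨h, bext_apply_self b u⟩,
      proj_bext b u⟩

lemma card_proj_add_card_tail (M : Finset (α → Bool)) :
    (M.image (proj x)).card + (tail x M).card = M.card := by
  classical
  set M0 := M.filter (fun c => c x = false) with hM0
  set M1 := M.filter (fun c => c x = true) with hM1
  have hunion : M0.image (proj x) ∪ M1.image (proj x) = M.image (proj x) := by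
    rw [← Finset.image_union]
    congr 1
    ext c
    simp only [Finset.mem_union, hM0, hM1, Finset.mem_filter]
    constructor
    · rintro (h | h) <;> exact h.1
    · intro h
      cases hc : c x
      · exact Or.inl ⟨h, rfl⟩
      · exact Or.inr ⟨h, rfl⟩
  have hinter : M1.image (proj x) ∩ M0.image (proj x) = tail x M := by
    ext u
    simp only [Finset.mem_inter, hM0, hM1, mem_image_proj_filter, tail, Finset.mem_filter,
      Finset.mem_univ, true_and]
  have hinj : ∀ b : Bool, Set.InjOn (proj x) (M.filter (fun c => c x = b)) := by
    intro b c hc c' hc' heq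
    have hcb := (Finset.mem_filter.1 hc).2
    have hcb' := (Finset.mem_filter.1 hc').2
    have : bext x (c x) (proj x c) = bext x (c' x) (proj x c') := by
      rw [hcb, hcb', heq]
    rwa [bext_proj, bext_proj] at this
  have hcard := Finset.card_union_add_card_inter (M1.image (proj x)) (M0.image (proj x))
  rw [Finset.union_comm, hunion, hinter] at hcard
  rw [hcard, Finset.card_image_of_injOn (hinj true), Finset.card_image_of_injOn (hinj false)]
  have hunion2 : M0 ∪ M1 = M := by
    ext c
    simp only [Finset.mem_union, hM0, hM1, Finset.mem_filter]
    constructor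
    · rintro (h | h) <;> exact h.1
    · intro h
      cases hc : c x
      · exact Or.inl ⟨h, rfl⟩
      · exact Or.inr ⟨h, rfl⟩
  have hdisj : Disjoint M0 M1 := by
    rw [Finset.disjoint_left]
    intro c h0 h1
    rw [hM0, Finset.mem_filter] at h0
    rw [hM1, Finset.mem_filter] at h1
    rw [h0.2] at h1
    exact Bool.false_ne_true h1.2
  have hM01 : M0.card + M1.card = M.card := by
    rw [← hunion2, Finset.card_union_of_disjoint hdisj]
  rw [← hM1, ← hM0, Nat.add_comm]
  exact hM01

lemma shatters_of_shatters_proj {M : Finset (α → Bool)} {S : Finset {i : α // i ≠ x}}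
    (h : Shatters (M.image (proj x)) S) : Shatters M (S.image Subtype.val) := by
  intro f
  obtain ⟨u, hu, hag⟩ := h (fun i => f i.1)
  obtain ⟨c, hc, rfl⟩ := Finset.mem_image.1 hu
  refine ⟨c, hc, ?_⟩
  intro i hi
  obtain ⟨j, hj, rfl⟩ := Finset.mem_image.1 hi
  exact hag j hj

lemma shatters_of_shatters_tail {M : Finset (α → Bool)} {S : Finset {i : α // i ≠ x}}
    (h : Shatters (tail x M) S) : Shatters M (insert x (S.image Subtype.val)) := by
  intro f
  obtain ⟨u, hu, hag⟩ := h (fun i => f i.1)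
  obtain ⟨hut, huf⟩ := (Finset.mem_filter.1 hu).2
  refine ⟨bext x (f x) u, ?_, ?_⟩
  · cases hfx : f x
    · rw [hfx] at *; exact huf
    · rw [hfx] at *; exact hut
  · intro i hi
    rcases Finset.mem_insert.1 hi with rfl | hi
    · exact bext_apply_self _ _
    · obtain ⟨j, hj, rfl⟩ := Finset.mem_image.1 hi
      rw [bext_apply_ne _ _ j.2]
      simpa using hag j hj

lemma card_subtype_ne {S : Finset α} (h : x ∉ S) :
    (S.subtype (· ≠ x)).card = S.card := by
  rw [Finset.card_subtype]
  congr 1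
  apply Finset.filter_true_of_mem
  intro i hi
  rintro rfl
  exact h hi

lemma shatters_proj_of_forall {N : Finset (α → Bool)} {B : Finset ({i : α // i ≠ x} → Bool)}
    (hproj : ∀ c ∈ N, proj x c ∈ B) {S : Finset α} (h : Shatters N S) :
    Shatters B (S.subtype (· ≠ x)) := by
  intro f'
  obtain ⟨c, hc, hag⟩ := h (bext x true f')
  refine ⟨proj x c, hproj c hc, ?_⟩
  intro i hi
  have hiS : i.1 ∈ S := by simpa using (Finset.mem_subtype.1 hi)
  have := hag i.1 hiS
  rw [bext_apply_ne _ _ i.2] at this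
  simpa [proj] using this

lemma shatters_true_part {N : Finset (α → Bool)} {A : Finset ({i : α // i ≠ x} → Bool)}
    {S : Finset α} (hxS : x ∈ S)
    (htrue : ∀ c ∈ N, c x = true → proj x c ∈ A) (h : Shatters N S) :
    Shatters A ((S.erase x).subtype (· ≠ x)) := by
  intro f'
  obtain ⟨c, hc, hag⟩ := h (bext x true f')
  have hcx : c x = true := by
    have := hag x hxS
    rwa [bext_apply_self] at this
  refine ⟨proj x c, htrue c hc hcx, ?_⟩
  intro i hi
  have hiS : i.1 ∈ S.erase x := by simpa using (Finset.mem_subtype.1 hi)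
  have := hag i.1 (Finset.mem_of_mem_erase hiS)
  rw [bext_apply_ne _ _ i.2] at this
  simpa [proj] using this

end Proj

open VCWork

lemma Phi_zero (m : ℕ) : Phi 0 m = 1 := by simp [Phi]

lemma vcDim_image_proj_le {α : Type*} [Fintype α] [DecidableEq α] {x : α}
    (M : Finset (α → Bool)) : _root_.vcDim (M.image (proj x)) ≤ _root_.vcDim M := by
  apply vcDim_le_of
  intro S hS
  have hc := le_vcDim_of_shatters (shatters_of_shatters_proj hS)
  rwa [Finset.card_image_of_injective _ Subtype.val_injective] at hc

lemma vcDim_tail_le {α : Type*} [Fintype α] [DecidableEq α] {x : α} {D : ℕ}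
    (M : Finset (α → Bool)) (hvc : _root_.vcDim M ≤ D + 1) :
    _root_.vcDim (tail x M) ≤ D := by
  apply vcDim_le_of
  intro S hS
  have hc := le_vcDim_of_shatters (shatters_of_shatters_tail hS)
  rw [Finset.card_insert_of_notMem, Finset.card_image_of_injective _ Subtype.val_injective]
    at hc
  · omega
  · simp only [Finset.mem_image, not_exists]
    rintro j hj
    exact j.2 hj.2

lemma sauer_aux : ∀ (m : ℕ) (α : Type) [Fintype α] [DecidableEq α],
    Fintype.card α = m → ∀ (D : ℕ) (M : Finset (α → Bool)),
    _root_.vcDim M ≤ D → M.card ≤ Phi D m := by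
  intro m
  induction m with
  | zero =>
    intro α _ _ hm D M _
    have h1 : M.card ≤ Fintype.card (α → Bool) :=
      le_trans (Finset.card_le_univ M) (le_of_eq (Finset.card_univ))
    rw [Fintype.card_fun, Fintype.card_bool, hm] at h1
    have : 1 ≤ Phi D 0 := by
      unfold Phi
      calc 1 = Nat.choose 0 0 := rfl
        _ ≤ _ := Finset.single_le_sum (f := fun i => Nat.choose 0 i)
            (fun i _ => Nat.zero_le _) (Finset.mem_range.2 (by omega))
    simpa using le_trans h1 this
  | succ m ih =>
    intro α _ _ hm D M hvc
    obtain ⟨x⟩ : Nonempty α := Fintype.card_pos_iff.1 (by omega)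
    have hsub : Fintype.card {i : α // i ≠ x} = m := by
      rw [card_compl_ne, hm]
      omega
    have hproj : _root_.vcDim (M.image (proj x)) ≤ D :=
      le_trans (vcDim_image_proj_le M) hvc
    have hcards := card_proj_add_card_tail (x := x) M
    have h1 : (M.image (proj x)).card ≤ Phi D m := ih _ hsub D _ hproj
    cases D with
    | zero =>
      have htail : tail x M = ∅ := by
        by_contra h
        obtain ⟨u, hu⟩ := Finset.nonempty_of_ne_empty h
        have hsh : Shatters (tail x M) ∅ := fun f => ⟨u, hu, by simp⟩
        have hc := le_vcDim_of_shatters (shatters_of_shatters_tail hsh)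
        have hcc : (insert x (Finset.image Subtype.val (∅ : Finset {i : α // i ≠ x}))).card = 1 := by
          simp
        omega
      rw [htail] at hcards
      simp only [Finset.card_empty, add_zero] at hcards
      rw [← hcards]
      rw [Phi_zero] at h1 ⊢
      exact h1
    | succ D' =>
      have htvc : _root_.vcDim (tail x M) ≤ D' := vcDim_tail_le M hvc
      have h2 : (tail x M).card ≤ Phi D' m := ih _ hsub D' _ htvc
      rw [Phi_pascal]
      omega

section Lift

variable {α : Type*} [Fintype α] [DecidableEq α] (x : α)

def lift (A B : Finset ({i : α // i ≠ x} → Bool)) : Finset (α → Bool) :=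
  B.image (bext x false) ∪ A.image (bext x true)

variable {x}

lemma card_lift (A B : Finset ({i : α // i ≠ x} → Bool)) :
    (lift x A B).card = B.card + A.card := by
  unfold lift
  rw [Finset.card_union_of_disjoint, Finset.card_image_of_injective _ (bext_injective false),
    Finset.card_image_of_injective _ (bext_injective true)]
  rw [Finset.disjoint_left]
  rintro c hc hc'
  obtain ⟨u, -, rfl⟩ := Finset.mem_image.1 hc
  obtain ⟨v, -, hv⟩ := Finset.mem_image.1 hc'
  have := congrFun hv x
  rw [bext_apply_self, bext_apply_self] at this
  exact Bool.noConfusion this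

lemma mem_lift {A B : Finset ({i : α // i ≠ x} → Bool)} (hAB : A ⊆ B)
    {c : α → Bool} (h : proj x c ∈ A) : c ∈ lift x A B := by
  unfold lift
  rw [Finset.mem_union]
  cases hcx : c x
  · exact Or.inl (Finset.mem_image.2 ⟨proj x c, hAB h, by rw [← hcx, bext_proj]⟩)
  · exact Or.inr (Finset.mem_image.2 ⟨proj x c, h, by rw [← hcx, bext_proj]⟩)

lemma vcDim_lift_le {A B : Finset ({i : α // i ≠ x} → Bool)} (hAB : A ⊆ B) {D : ℕ}
    (hA : _root_.vcDim A ≤ D) (hB : _root_.vcDim B ≤ D + 1) :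
    _root_.vcDim (lift x A B) ≤ D + 1 := by
  apply vcDim_le_of
  intro S hS
  by_cases hxS : x ∈ S
  · have htrue : ∀ c ∈ lift x A B, c x = true → proj x c ∈ A := by
      intro c hc hcx
      rcases Finset.mem_union.1 hc with h | h
      · obtain ⟨u, hu, rfl⟩ := Finset.mem_image.1 h
        rw [bext_apply_self] at hcx
        exact Bool.noConfusion hcx
      · obtain ⟨u, hu, rfl⟩ := Finset.mem_image.1 h
        rw [proj_bext]
        exact hu
    have hc := le_vcDim_of_shatters (shatters_true_part hxS htrue hS)
    have hx' : x ∉ S.erase x := Finset.notMem_erase x S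
    rw [card_subtype_ne hx', Finset.card_erase_of_mem hxS] at hc
    have hpos : 1 ≤ S.card := Finset.card_pos.2 ⟨x, hxS⟩
    have hcA := le_trans hc hA
    omega
  · have hproj : ∀ c ∈ lift x A B, proj x c ∈ B := by
      intro c hc
      rcases Finset.mem_union.1 hc with h | h
      · obtain ⟨u, hu, rfl⟩ := Finset.mem_image.1 h
        rw [proj_bext]; exact hu
      · obtain ⟨u, hu, rfl⟩ := Finset.mem_image.1 h
        rw [proj_bext]; exact hAB hu
    have hc := le_vcDim_of_shatters (shatters_proj_of_forall hproj hS)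
    rw [card_subtype_ne hxS] at hc
    exact le_trans hc hB

end Lift

lemma extension : ∀ (m : ℕ) (α : Type) [Fintype α] [DecidableEq α],
    Fintype.card α = m → ∀ (D : ℕ) (M : Finset (α → Bool)),
    M.card = Phi D m → _root_.vcDim M ≤ D →
    ∃ M', M ⊆ M' ∧ M'.card = Phi (D+1) m ∧ _root_.vcDim M' ≤ D + 1 := by
  intro m
  induction m with
  | zero =>
    intro α _ _ hm D M _ _
    refine ⟨Finset.univ, Finset.subset_univ M, ?_, ?_⟩
    · rw [Finset.card_univ, Fintype.card_fun, Fintype.card_bool, hm, Phi_eq_pow _ _ (by omega)]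
    · exact le_trans (vcDim_le_card _) (by omega)
  | succ m ih =>
    intro α _ _ hm D M hcard hvc
    by_cases hDm : m + 1 ≤ D
    · refine ⟨Finset.univ, Finset.subset_univ M, ?_, ?_⟩
      · rw [Finset.card_univ, Fintype.card_fun, Fintype.card_bool, hm, Phi_eq_pow _ _ (by omega)]
      · exact le_trans (vcDim_le_card _) (by rw [hm]; omega)
    · cases D with
      | zero =>
        -- M is a single point; take the Hamming ball of radius 1 around it.
        rw [Phi_zero] at hcard
        obtain ⟨c₀, rfl⟩ := Finset.card_eq_one.1 hcard
        refine ⟨insert c₀ (Finset.univ.image fun i => Function.update c₀ i (!c₀ i)),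
          ?_, ?_, ?_⟩
        · simp
        · have hinj : Function.Injective (fun i => Function.update c₀ i (!c₀ i)) := by
            intro i j hij
            by_contra hne
            have := congrFun hij i
            simp [Function.update_of_ne hne] at this
          have hnot : c₀ ∉ Finset.univ.image fun i => Function.update c₀ i (!c₀ i) := by
            rw [Finset.mem_image]
            rintro ⟨i, -, hi⟩
            have := congrFun hi i
            simp at this
          rw [Finset.card_insert_of_notMem hnot,
            Finset.card_image_of_injective _ hinj, Finset.card_univ, hm]
          unfold Phi
          simp [Finset.sum_range_succ]
          omega
        · apply vcDim_le_of
          intro S hS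
          by_contra hcS
          push_neg at hcS
          obtain ⟨i, hi, j, hj, hij⟩ := Finset.one_lt_card.1 (show 1 < S.card by omega)
          obtain ⟨c, hc, hag⟩ := hS (fun t => !c₀ t)
          have hci : c i = !c₀ i := hag i hi
          have hcj : c j = !c₀ j := hag j hj
          rcases Finset.mem_insert.1 hc with rfl | hc
          · simp at hci
          · obtain ⟨t, -, rfl⟩ := Finset.mem_image.1 hc
            rcases eq_or_ne i t with rfl | hit
            · rw [Function.update_of_ne hij.symm] at hcj
              simp at hcj
            · rw [Function.update_of_ne hit] at hci
              simp at hci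
      | succ D' =>
        obtain ⟨x⟩ : Nonempty α := Fintype.card_pos_iff.1 (by omega)
        have hsub : Fintype.card {i : α // i ≠ x} = m := by
          rw [card_compl_ne, hm]
          omega
        set P := M.image (proj x) with hP
        have hPvc : _root_.vcDim P ≤ D' + 1 := le_trans (vcDim_image_proj_le M) hvc
        have hTvc : _root_.vcDim (tail x M) ≤ D' := vcDim_tail_le M hvc
        have hPcard : P.card ≤ Phi (D'+1) m := sauer_aux m _ hsub _ _ hPvc
        have hTcard : (tail x M).card ≤ Phi D' m := sauer_aux m _ hsub _ _ hTvc
        have hsum := card_proj_add_card_tail (x := x) M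
        rw [hcard, Phi_pascal] at hsum
        have hPeq : P.card = Phi (D'+1) m := by rw [← hP] at hsum; omega
        obtain ⟨M'', hPM'', hM''card, hM''vc⟩ := ih _ hsub (D'+1) P hPeq hPvc
        refine ⟨lift x P M'', ?_, ?_, ?_⟩
        · intro c hc
          exact mem_lift hPM'' (Finset.mem_image_of_mem _ hc)
        · rw [card_lift, hM''card, hPeq, Phi_pascal]
        · exact vcDim_lift_le hPM'' hPvc hM''vc

lemma step_lemma {α : Type} [Fintype α] [DecidableEq α] (x : α) (C : Finset (α → Bool))
    (D : ℕ) (M : Finset ({i : α // i ≠ x} → Bool)) (hCM : C.image (proj x) ⊆ M)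
    (hMcard : M.card = Phi D (Fintype.card α - 1)) (hMvc : _root_.vcDim M ≤ D) :
    ∃ Cs, C ⊆ Cs ∧ Cs.card = Phi (D+1) (Fintype.card α) ∧ _root_.vcDim Cs ≤ D + 1 := by
  obtain ⟨M', hMM', hM'card, hM'vc⟩ :=
    extension (Fintype.card α - 1) _ card_compl_ne D M hMcard hMvc
  refine ⟨lift x M M', fun c hc => mem_lift hMM' (hCM (Finset.mem_image_of_mem _ hc)),
    ?_, vcDim_lift_le hMM' hMvc hM'vc⟩
  rw [card_lift, hM'card, hMcard]
  have hpos : 1 ≤ Fintype.card α := Fintype.card_pos_iff.2 ⟨x⟩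
  obtain ⟨m, hm⟩ : ∃ m, Fintype.card α = m + 1 := ⟨Fintype.card α - 1, by omega⟩
  rw [hm]
  simp only [Nat.add_sub_cancel]
  exact (Phi_pascal D m).symm

def projAway {α : Type*} [DecidableEq α] (K : Finset α) (c : α → Bool) :
    {i : α // i ∉ K} → Bool := fun i => c i.1

lemma main_lemma : ∀ (k : ℕ) (α : Type) [Fintype α] [DecidableEq α] (K : Finset α),
    K.card = k → ∀ (d : ℕ) (C : Finset (α → Bool)),
    (C.image (projAway K)).card = Phi d (Fintype.card α - k) →
    _root_.vcDim (C.image (projAway K)) ≤ d →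
    ∃ Cs, C ⊆ Cs ∧ Cs.card = Phi (d + k) (Fintype.card α) ∧ _root_.vcDim Cs ≤ d + k := by
  intro k
  induction k with
  | zero =>
    intro α _ _ K hK d C h1 h2
    have hKe : K = ∅ := Finset.card_eq_zero.1 hK
    subst hKe
    have hinj : Function.Injective (projAway (∅ : Finset α)) := by
      intro c c' h
      funext i
      exact congrFun h ⟨i, Finset.notMem_empty i⟩
    refine ⟨C, subset_rfl, ?_, ?_⟩
    · rw [← Finset.card_image_of_injective C hinj, h1]
      simp
    · refine le_trans (vcDim_le_of ?_) h2
      intro S hS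
      have hsh : Shatters (C.image (projAway (∅ : Finset α)))
          (S.subtype (fun i => i ∉ (∅ : Finset α))) := by
        intro f'
        obtain ⟨c, hc, hag⟩ := hS (fun i => f' ⟨i, Finset.notMem_empty i⟩)
        refine ⟨projAway ∅ c, Finset.mem_image_of_mem _ hc, ?_⟩
        intro i hi
        have := hag i.1 (by simpa using Finset.mem_subtype.1 hi)
        simpa [projAway] using this
      have hc := le_vcDim_of_shatters hsh
      have hceq : (S.subtype (fun i => i ∉ (∅ : Finset α))).card = S.card := by
        rw [Finset.card_subtype, Finset.filter_true_of_mem (fun i _ => Finset.notMem_empty i)]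
      rwa [hceq] at hc
  | succ k ih =>
    intro α _ _ K hK d C h1 h2
    obtain ⟨x, hxK⟩ := Finset.card_pos.1 (show 0 < K.card by omega)
    have hxni : ∀ i : {i : α // i ∉ K}, i.1 ≠ x := by
      rintro i rfl
      exact i.2 hxK
    set K' := K.erase x with hK'def
    set K₁ : Finset {i : α // i ≠ x} := K'.subtype (· ≠ x) with hK₁
    have hK₁card : K₁.card = k := by
      rw [hK₁, Finset.card_subtype, Finset.filter_true_of_mem
        (fun i hi => (Finset.mem_erase.1 hi).1), Finset.card_erase_of_mem hxK, hK]
      omega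
    set C₁ := C.image (proj x) with hC₁
    -- the transfer map between the two projection targets
    set g : {j : {i : α // i ≠ x} // j ∉ K₁} → {i : α // i ∉ K} :=
      fun j => ⟨j.1.1, fun hmem =>
        j.2 (Finset.mem_subtype.2 (Finset.mem_erase.2 ⟨j.1.2, hmem⟩))⟩ with hg
    set F : ({i : α // i ∉ K} → Bool) → ({j : {i : α // i ≠ x} // j ∉ K₁} → Bool) :=
      fun u j => u (g j) with hF
    have himg : C₁.image (projAway K₁) = (C.image (projAway K)).image F := by
      rw [hC₁, Finset.image_image, Finset.image_image]
      rfl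
    have hFinj : Function.Injective F := by
      intro u u' h
      funext i
      have hne : i.1 ≠ x := hxni i
      have hnK' : (⟨i.1, hne⟩ : {i : α // i ≠ x}) ∉ K₁ := by
        rw [hK₁, Finset.mem_subtype]
        intro hmem
        exact i.2 (Finset.mem_of_mem_erase (hK'def ▸ hmem))
      have := congrFun h ⟨⟨i.1, hne⟩, hnK'⟩
      rw [hF] at this
      simpa [hg] using this
    have hcard1 : (C₁.image (projAway K₁)).card = Phi d (Fintype.card {i : α // i ≠ x} - k) := by
      rw [himg, Finset.card_image_of_injective _ hFinj, h1, card_compl_ne, Nat.sub_sub, Nat.add_comm 1 k]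
    have hvc1 : _root_.vcDim (C₁.image (projAway K₁)) ≤ d := by
      refine le_trans (vcDim_le_of ?_) h2
      intro S hS
      rw [himg] at hS
      have hsh : Shatters (C.image (projAway K)) (S.image g) := by
        intro f
        obtain ⟨u', hu', hag⟩ := hS (fun j => f (g j))
        obtain ⟨u, hu, rfl⟩ := Finset.mem_image.1 hu'
        refine ⟨u, hu, ?_⟩
        intro i hi
        obtain ⟨j, hj, rfl⟩ := Finset.mem_image.1 hi
        exact hag j hj
      have hc := le_vcDim_of_shatters hsh
      have hginj : Function.Injective g := by
        intro a b hab
        have hval : (g a).1 = (g b).1 := congrArg Subtype.val hab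
        apply Subtype.ext
        apply Subtype.ext
        exact hval
      rwa [Finset.card_image_of_injective _ hginj] at hc
    obtain ⟨M, hCM, hMcard, hMvc⟩ := ih _ K₁ hK₁card d C₁ hcard1 hvc1
    rw [card_compl_ne] at hMcard
    obtain ⟨Cs, hCCs, hCscard, hCsvc⟩ :=
      step_lemma x C (d + k) M (hC₁ ▸ hCM) hMcard hMvc
    exact ⟨Cs, hCCs, by rw [hCscard]; ring_nf, by omega⟩

/-- If a class `C` of VC dimension `d` projects, under deletion of `k`
coordinates, onto a maximum class of VC dimension `d`, then `C` is contained in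
a maximum class of VC dimension `d + k`. -/
theorem embeds_in_maximum_of_maximum_projection (n k d : ℕ)
    (C : Finset (Fin n → Bool)) (K : Finset (Fin n)) (hK : K.card = k)
    (hC : vcDim C = d)
    (hmaxcard : (C.image (projAwaySet K)).card
      = ∑ i ∈ Finset.range (d + 1), (n - k).choose i)
    (hmaxvc : vcDim (C.image (projAwaySet K)) = d) :
    ∃ Cs : Finset (Fin n → Bool), C ⊆ Cs ∧
      Cs.card = ∑ i ∈ Finset.range (d + k + 1), n.choose i ∧
      vcDim Cs = d + k := by
  have hPA : projAwaySet K = projAway K := rfl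
  have hcardsub : Fintype.card {i : Fin n // i ∉ K} = n - k := by
    have h := Fintype.card_subtype_compl (fun i : Fin n => i ∈ K)
    simp only [Fintype.card_fin, Fintype.card_coe, hK] at h
    exact h
  have h1 : (C.image (projAway K)).card = Phi d (Fintype.card (Fin n) - k) := by
    rw [← hPA, Fintype.card_fin]
    exact hmaxcard
  have h2 : _root_.vcDim (C.image (projAway K)) ≤ d := by
    rw [← hPA, hmaxvc]
  obtain ⟨Cs, hsub, hcard, hvc⟩ := main_lemma k (Fin n) K hK d C h1 h2
  rw [Fintype.card_fin] at hcard
  refine ⟨Cs, hsub, hcard, ?_⟩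
  have hd : d ≤ n - k := by
    have := vcDim_le_card (C.image (projAwaySet K))
    rw [hmaxvc, hcardsub] at this
    exact this
  have hkn : k ≤ n := by
    have := Finset.card_le_univ K
    rw [hK] at this
    simpa using this
  have hdk_le : d + k ≤ n := by omega
  refine le_antisymm hvc ?_
  by_contra hlt
  push_neg at hlt
  have hvcle : _root_.vcDim Cs ≤ d + k - 1 := by omega
  have hS : Cs.card ≤ Phi (d + k - 1) n :=
    sauer_aux n (Fin n) (Fintype.card_fin n) _ Cs hvcle
  rw [hcard] at hS
  have hsplit : Phi (d + k) n = Phi (d + k - 1) n + n.choose (d + k) := by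
    obtain ⟨E, hE⟩ : ∃ E, d + k = E + 1 := ⟨d + k - 1, by omega⟩
    rw [hE, Nat.add_sub_cancel]
    unfold Phi
    exact Finset.sum_range_succ _ _
  have hc0 : 0 < n.choose (d + k) := Nat.choose_pos hdk_le
  have hCsPhi : Cs.card = Phi (d + k) n := hcard
  omega
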